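/- Let D be a finite-dimensional simple real associative algebra with a division G-grading Γ_0 of type (1-d), i.e. all homogeneous components are one-dimensional and the support T is not an elementary abelian 2-group. Then every automorphism of D stabilizing the grading is inner, and the stabilizer is isomorphic to Hom(T, {±1}) ≅ T / T^[2], where T^[2] = {t² : t ∈ T}. -/

import Mathlib

/-- The doubling homomorphism `t ↦ t + t` of an abelian group; its range is
`T^[2] = {t² : t ∈ T}` (written additively). -/
def doublingHom (A : Type*) [AddCommGroup A] : A →+ A where
  toFun t := t + t
  map_zero' := by simp
  map_add' a b := by abel_nf

/-!
A grading-stabilizing automorphism acts on each one-dimensional component `𝒟 t` by a scalar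
`χ t`, and `χ : T → ℝˣ` is a character, `±1`-valued since `T` is finite. Conjugation by a
nonzero `u ∈ 𝒟 s` is such an automorphism, and its character is the commutation factor
`β(s, ·)`, so `β : T → Hom(T, ℝˣ)` is a homomorphism. An element of its kernel has central
homogeneous components; the centre of a simple finite-dimensional real algebra is `ℝ` or `ℂ`,
and `0` and some `t + t ≠ 0` are already central degrees, so the kernel lies in `T^[2]`. As
`Hom(T, ℝˣ) ≅ Hom(T / T^[2], ZMod 2) ≅ T / T^[2]`, counting shows that `β` is onto. Hence
every character is the character of an inner automorphism, and an automorphism is determined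
by its character.
-/

open Module

theorem LinearMap.ext_of_iSup_eq_top {R M N ι : Type*} [Semiring R] [AddCommMonoid M]
    [AddCommMonoid N] [Module R M] [Module R N] {p : ι → Submodule R M} (hp : ⨆ i, p i = ⊤)
    {f g : M →ₗ[R] N} (h : ∀ i, ∀ x ∈ p i, f x = g x) : f = g :=
  ext_on (s := ⋃ i, (p i : Set M)) (by rw [← Submodule.iSup_eq_span, hp]) fun x hx ↦ by
    obtain ⟨i, hi⟩ := Set.mem_iUnion.1 hx
    exact h i x hi

namespace Submodule

variable {K V : Type*} [Field K] [AddCommGroup V] [Module K V] {W : Submodule K V}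

theorem exists_eq_smul_of_finrank_eq_one (hW : finrank K W = 1) {x y : V}
    (hx : x ∈ W) (hy : y ∈ W) (hy0 : y ≠ 0) : ∃ c : K, x = c • y := by
  rw [eq_span_singleton_of_mem_of_finrank_eq_one hW hy hy0, mem_span_singleton] at hx
  exact hx.imp fun _ h ↦ h.symm

theorem exists_smul_of_mapsTo (hW : finrank K W = 1) (f : V →ₗ[K] V)
    (hf : ∀ x ∈ W, f x ∈ W) : ∃ c : K, ∀ x ∈ W, f x = c • x := by
  obtain ⟨c, hc, -⟩ := LinearMap.existsUnique_eq_smul_id_of_finrank_eq_one hW (f.restrict hf)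
  exact ⟨c, fun x hx ↦ congrArg Subtype.val (LinearMap.congr_fun hc ⟨x, hx⟩)⟩

theorem card_le_finrank_of_iSupIndep [FiniteDimensional K V] {ι : Type*}
    {p : ι → Submodule K V} (hp : iSupIndep p) (S : Finset ι)
    (hS : ∀ i ∈ S, ∃ x ∈ p i, x ≠ 0 ∧ x ∈ W) : S.card ≤ finrank K W := by
  choose x hxp hx0 hxW using hS
  have hli : LinearIndependent K (fun i : S ↦ x i i.2) :=
    iSupIndep.linearIndependent (fun i : S ↦ p i) (hp.comp Subtype.val_injective)
      (fun i ↦ hxp i i.2) (fun i ↦ hx0 i i.2)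
  have hliW : LinearIndependent K (fun i : S ↦ (⟨x i i.2, hxW i i.2⟩ : W)) :=
    .of_comp W.subtype hli
  simpa using hliW.fintype_card_le_finrank

end Submodule

theorem mem_center_of_forall_commute {ι R A : Type*} [CommSemiring R] [Semiring A]
    [Algebra R A] {p : ι → Submodule R A} (hp : ⨆ i, p i = ⊤) {y : A}
    (hy : ∀ i, ∀ x ∈ p i, x * y = y * x) : y ∈ Subalgebra.center R A :=
  Subalgebra.mem_center_iff.2 fun x ↦ LinearMap.congr_fun
    (LinearMap.ext_of_iSup_eq_top hp (f := LinearMap.mulRight R y) (g := LinearMap.mulLeft R y)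
      hy) x

noncomputable def innerAut {R A : Type*} [CommSemiring R] [Semiring A] [Algebra R A]
    (u : Aˣ) : A ≃ₐ[R] A :=
  MulSemiringAction.toAlgEquiv R A (ConjAct.toConjAct u)

theorem innerAut_apply {R A : Type*} [CommSemiring R] [Semiring A] [Algebra R A] (u : Aˣ)
    (x : A) : innerAut (R := R) u x = u * x * ↑u⁻¹ :=
  rfl

theorem finrank_center_le_two (D : Type*) [Ring D] [Algebra ℝ D] [FiniteDimensional ℝ D]
    [IsSimpleRing D] : finrank ℝ (Subalgebra.center ℝ D) ≤ 2 := by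
  have hZ : IsField (Subalgebra.center ℝ D) := IsSimpleRing.isField_center D
  have : IsSimpleRing (Subalgebra.center ℝ D) := (isSimpleRing_iff_isField _).2 hZ
  let _ := hZ.toField
  calc finrank ℝ (Subalgebra.center ℝ D) ≤ finrank ℝ ℂ :=
        LinearMap.finrank_le_finrank_of_injective
          (f := (IsAlgClosed.lift : Subalgebra.center ℝ D →ₐ[ℝ] ℂ).toLinearMap)
          (RingHom.injective _)
    _ = 2 := Complex.finrank_real_complex

section RealCharacters

/-- `ZMod 2 ≅ {1, -1} ⊆ ℝˣ`. -/
noncomputable def signChar : ZMod 2 →+ Additive ℝˣ :=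
  ZMod.lift 2 ⟨zmultiplesHom _ (.ofMul (-1)), by simp [← ofMul_zpow]⟩

theorem signChar_one : signChar 1 = .ofMul (-1) := by
  rw [← Int.cast_one, signChar, ZMod.lift_coe]
  simp

theorem signChar_injective : Function.Injective signChar := by
  rw [injective_iff_map_eq_zero]
  intro j hj
  obtain rfl | rfl : j = 0 ∨ j = 1 := by clear hj; revert j; decide
  · rfl
  · simp [signChar_one] at hj

theorem mem_range_signChar {n : ℕ} (hn : n ≠ 0) {x : Additive ℝˣ} (hx : n • x = 0) :
    x ∈ signChar.range := by
  have : ((x.toMul : ℝˣ) : ℝ) ^ n = 1 := by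
    rw [← Units.val_pow_eq_pow_val, ← toMul_nsmul, hx]
    rfl
  rcases pow_eq_one_iff_cases.mp this with h | h | ⟨h, -⟩
  · exact absurd h hn
  · exact ⟨0, by ext; simp [h]⟩
  · exact ⟨1, by ext; simp [signChar_one, h]⟩

variable (T : Type*) [AddCommGroup T]

noncomputable def zmodTwoCharEquiv [Finite T] : (T →+ ZMod 2) ≃+ (T →+ Additive ℝˣ) := by
  refine .ofBijective (AddMonoidHom.compHom signChar) ⟨fun φ φ' h ↦ ?_, fun χ ↦ ?_⟩
  · ext t
    exact signChar_injective (DFunLike.congr_fun h t)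
  · have hχ (t : T) : χ t ∈ signChar.range := mem_range_signChar (addOrderOf_pos t).ne' <| by
      rw [← map_nsmul, addOrderOf_nsmul_eq_zero, map_zero]
    refine ⟨(AddMonoidHom.ofInjective signChar_injective).symm.toAddMonoidHom.comp
      (χ.codRestrict _ hχ), ?_⟩
    ext t
    simp [AddMonoidHom.apply_ofInjective_symm]

instance : Module (ZMod 2) (T ⧸ (doublingHom T).range) :=
  QuotientAddGroup.zmodModule fun t ↦ ⟨t, (two_nsmul t).symm⟩

noncomputable def dualQuotientDoublingEquiv :
    Dual (ZMod 2) (T ⧸ (doublingHom T).range) ≃+ (T →+ ZMod 2) where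
  toFun f := (f : T ⧸ (doublingHom T).range →+ ZMod 2).comp (QuotientAddGroup.mk' _)
  invFun φ := (QuotientAddGroup.lift _ φ (by
    rintro _ ⟨t, rfl⟩
    exact (map_add φ t t).trans (CharTwo.add_self_eq_zero (φ t)))).toZModLinearMap 2
  left_inv f := by
    ext x
    induction x using QuotientAddGroup.induction_on
    rfl
  right_inv φ := rfl
  map_add' f f' := rfl

theorem nonempty_addEquiv_quotient_doubling [Finite T] :
    Nonempty ((T →+ Additive ℝˣ) ≃+ T ⧸ (doublingHom T).range) :=
  ⟨(zmodTwoCharEquiv T).symm.trans <| (dualQuotientDoublingEquiv T).symm.trans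
    (finBasis (ZMod 2) _).toDualEquiv.symm.toAddEquiv⟩

variable {T}

theorem realChar_add_self [Finite T] (χ : T →+ Additive ℝˣ) : χ + χ = 0 := by
  apply (zmodTwoCharEquiv T).symm.injective
  ext t
  simp [CharTwo.add_self_eq_zero]

theorem surjective_of_ker_le_doubling [Finite T] (β : T →+ (T →+ Additive ℝˣ))
    (hβ : β.ker ≤ (doublingHom T).range) : Function.Surjective β := by
  let β' := QuotientAddGroup.lift (doublingHom T).range β
    (by rintro _ ⟨t, rfl⟩; exact (map_add β t t).trans (realChar_add_self _))
  have hinj : Function.Injective β' := by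
    rw [injective_iff_map_eq_zero]
    intro x hx
    induction x using QuotientAddGroup.induction_on with | H t => ?_
    exact (QuotientAddGroup.eq_zero_iff t).mpr (hβ hx)
  obtain ⟨e⟩ := nonempty_addEquiv_quotient_doubling T
  have := Finite.of_equiv _ e.symm.toEquiv
  intro χ
  obtain ⟨x, rfl⟩ := (hinj.bijective_of_nat_card_le (Nat.card_congr e.toEquiv).le).2 χ
  induction x using QuotientAddGroup.induction_on with | H t => exact ⟨t, rfl⟩

end RealCharacters

section GradedAlgebra

variable {G D : Type*} [AddCommGroup G] [Ring D] [Algebra ℝ D]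
  {𝒟 : G → Submodule ℝ D} {T : AddSubgroup G}

def ActsByCharacter (𝒟 : G → Submodule ℝ D) (T : AddSubgroup G) (f : D →ₗ[ℝ] D)
    (χ : T →+ Additive ℝˣ) : Prop :=
  ∀ t : T, ∀ x ∈ 𝒟 t, f x = ((χ t).toMul : ℝ) • x

def IsCommutationFactor (𝒟 : G → Submodule ℝ D) (T : AddSubgroup G)
    (β : T →+ T →+ Additive ℝˣ) : Prop :=
  ∀ s t : T, ∀ u ∈ 𝒟 s, ∀ x ∈ 𝒟 t, u * x = ((β s t).toMul : ℝ) • (x * u)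

theorem exists_mem_ne_zero_of_mem_support (hT : ∀ a, 𝒟 a ≠ ⊥ ↔ a ∈ T) (t : T) :
    ∃ x ∈ 𝒟 t, x ≠ 0 :=
  Submodule.exists_mem_ne_zero_of_ne_bot ((hT t).2 t.2)

theorem eq_zero_of_mem_of_notMem_support (hT : ∀ a, 𝒟 a ≠ ⊥ ↔ a ∈ T) {a : G} (ha : a ∉ T)
    {x : D} (hx : x ∈ 𝒟 a) : x = 0 := by
  rwa [not_not.1 (mt (hT a).1 ha), Submodule.mem_bot] at hx

theorem exists_unit_mem (hT : ∀ a, 𝒟 a ≠ ⊥ ↔ a ∈ T)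
    (hdiv : ∀ a : G, ∀ d ∈ 𝒟 a, d ≠ 0 → IsUnit d) (t : T) : ∃ u : Dˣ, (u : D) ∈ 𝒟 t := by
  obtain ⟨x, hx, hx0⟩ := exists_mem_ne_zero_of_mem_support hT t
  exact ⟨(hdiv _ x hx hx0).unit, hx⟩

theorem finite_support [FiniteDimensional ℝ D] (hindep : iSupIndep 𝒟)
    (hT : ∀ a, 𝒟 a ≠ ⊥ ↔ a ∈ T) : Finite T :=
  have := hindep.fintypeNeBotOfFiniteDimensional
  Finite.of_injective (fun t : T ↦ (⟨t, (hT t).2 t.2⟩ : {a // 𝒟 a ≠ ⊥}))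
    fun _ _ h ↦ Subtype.ext (by simpa using congrArg Subtype.val h)

namespace ActsByCharacter

variable {f g : D →ₗ[ℝ] D} {χ χ' : T →+ Additive ℝˣ}

theorem linearMap_eq (htop : ⨆ a, 𝒟 a = ⊤) (hT : ∀ a, 𝒟 a ≠ ⊥ ↔ a ∈ T)
    (hf : ActsByCharacter 𝒟 T f χ) (hg : ActsByCharacter 𝒟 T g χ) : f = g := by
  refine LinearMap.ext_of_iSup_eq_top htop fun a x hx ↦ ?_
  by_cases ha : a ∈ T
  · exact (hf ⟨a, ha⟩ x hx).trans (hg ⟨a, ha⟩ x hx).symm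
  · simp [eq_zero_of_mem_of_notMem_support hT ha hx]

theorem character_eq (hT : ∀ a, 𝒟 a ≠ ⊥ ↔ a ∈ T) (hχ : ActsByCharacter 𝒟 T f χ)
    (hχ' : ActsByCharacter 𝒟 T f χ') : χ = χ' := by
  ext t
  obtain ⟨x, hx, hx0⟩ := exists_mem_ne_zero_of_mem_support hT t
  exact smul_left_injective ℝ hx0 ((hχ t x hx).symm.trans (hχ' t x hx))

theorem comp (hf : ActsByCharacter 𝒟 T f χ) (hg : ActsByCharacter 𝒟 T g χ') :
    ActsByCharacter 𝒟 T (f ∘ₗ g) (χ + χ') := by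
  intro t x hx
  rw [LinearMap.comp_apply, hg t x hx, map_smul, hf t x hx, smul_smul, mul_comm]
  simp

theorem mapsTo (hT : ∀ a, 𝒟 a ≠ ⊥ ↔ a ∈ T) (hf : ActsByCharacter 𝒟 T f χ) (a : G) :
    ∀ x ∈ 𝒟 a, f x ∈ 𝒟 a := by
  intro x hx
  by_cases ha : a ∈ T
  · rw [hf ⟨a, ha⟩ x hx]
    exact Submodule.smul_mem _ _ hx
  · simp [eq_zero_of_mem_of_notMem_support hT ha hx]

end ActsByCharacter

namespace IsCommutationFactor

variable {β : T →+ T →+ Additive ℝˣ}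

theorem actsByCharacter_innerAut (hβ : IsCommutationFactor 𝒟 T β) {s : T} {u : Dˣ}
    (hu : ↑u ∈ 𝒟 s) : ActsByCharacter 𝒟 T (innerAut u).toLinearMap (β s) := by
  intro t x hx
  rw [AlgEquiv.toLinearMap_apply, innerAut_apply, hβ s t u hu x hx, smul_mul_assoc, mul_assoc,
    u.mul_inv, mul_one]

theorem ker_le_doubling [FiniteDimensional ℝ D] [IsSimpleRing D] [Finite T]
    (hβ : IsCommutationFactor 𝒟 T β) (hT : ∀ a, 𝒟 a ≠ ⊥ ↔ a ∈ T) (htop : ⨆ a, 𝒟 a = ⊤)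
    (hindep : iSupIndep 𝒟) (hnot2 : ∃ t ∈ T, t + t ≠ 0) :
    β.ker ≤ (doublingHom T).range := by
  classical
  intro s hs
  by_contra hs2
  obtain ⟨t₀, ht₀T, ht₀⟩ := hnot2
  have hcentral (r : T) (hr : β r = 0) :
      ∃ x ∈ 𝒟 r, x ≠ 0 ∧ x ∈ (Subalgebra.center ℝ D).toSubmodule := by
    obtain ⟨x, hx, hx0⟩ := exists_mem_ne_zero_of_mem_support hT r
    refine ⟨x, hx, hx0, mem_center_of_forall_commute htop fun a y hy ↦ ?_⟩
    by_cases ha : a ∈ T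
    · simpa [hr] using (hβ r ⟨a, ha⟩ x hx y hy).symm
    · simp [eq_zero_of_mem_of_notMem_support hT ha hy]
  have hcard : ({0, t₀ + t₀, (s : G)} : Finset G).card = 3 := by
    refine Finset.card_eq_three.2 ⟨0, t₀ + t₀, s, ht₀.symm, fun h ↦ hs2 ⟨0, ?_⟩,
      fun h ↦ hs2 ⟨⟨t₀, ht₀T⟩, Subtype.ext h⟩, rfl⟩
    rw [map_zero]
    exact Subtype.ext h
  have hle := Submodule.card_le_finrank_of_iSupIndep hindep {0, t₀ + t₀, (s : G)} (by
    simp only [Finset.mem_insert, Finset.mem_singleton]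
    rintro a (rfl | rfl | rfl)
    · exact hcentral 0 (map_zero β)
    · exact hcentral ⟨t₀ + t₀, T.add_mem ht₀T ht₀T⟩
        ((map_add β ⟨t₀, ht₀T⟩ ⟨t₀, ht₀T⟩).trans (realChar_add_self _))
    · exact hcentral s hs)
  rw [Subalgebra.finrank_toSubmodule] at hle
  have := finrank_center_le_two D
  omega

end IsCommutationFactor

variable [SetLike.GradedMonoid 𝒟]

theorem exists_actsByCharacter (hT : ∀ a, 𝒟 a ≠ ⊥ ↔ a ∈ T)
    (hdim : ∀ a ∈ T, finrank ℝ (𝒟 a) = 1) (hdiv : ∀ a : G, ∀ d ∈ 𝒟 a, d ≠ 0 → IsUnit d)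
    (ψ : D ≃ₐ[ℝ] D) (hψ : ∀ t : T, ∀ x ∈ 𝒟 t, ψ x ∈ 𝒟 t) :
    ∃ χ, ActsByCharacter 𝒟 T ψ.toLinearMap χ := by
  choose c hc using fun t : T ↦
    Submodule.exists_smul_of_mapsTo (hdim t t.2) ψ.toLinearMap (hψ t)
  have hc0 (t : T) : c t ≠ 0 := by
    obtain ⟨x, hx, hx0⟩ := exists_mem_ne_zero_of_mem_support hT t
    intro h
    apply hx0 (ψ.injective _)
    simpa [h] using hc t x hx
  have hcadd (s t : T) : c (s + t) = c s * c t := by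
    obtain ⟨x, hx, hx0⟩ := exists_mem_ne_zero_of_mem_support hT s
    obtain ⟨y, hy, hy0⟩ := exists_mem_ne_zero_of_mem_support hT t
    have hxy : x * y ≠ 0 := by rwa [Ne, (hdiv _ x hx hx0).mul_right_eq_zero]
    have h := map_mul ψ x y
    simp only [← AlgEquiv.toLinearMap_apply, hc s x hx, hc t y hy,
      hc (s + t) _ (SetLike.mul_mem_graded hx hy), smul_mul_smul_comm] at h
    exact smul_left_injective ℝ hxy h
  refine ⟨AddMonoidHom.mk' (fun t ↦ .ofMul (Units.mk0 (c t) (hc0 t))) fun s t ↦ ?_, hc⟩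
  ext
  simp [hcadd]

theorem exists_mul_eq_smul_mul (hdim : ∀ a ∈ T, finrank ℝ (𝒟 a) = 1) {s t : T} {u x : D}
    (hu : u ∈ 𝒟 s) (hx : x ∈ 𝒟 t) (hxu : x * u ≠ 0) : ∃ c : ℝ, u * x = c • (x * u) := by
  have hxu' : x * u ∈ 𝒟 ↑(s + t) := by
    rw [AddSubgroup.coe_add, add_comm]
    exact SetLike.mul_mem_graded hx hu
  exact Submodule.exists_eq_smul_of_finrank_eq_one (hdim _ (s + t).2)
    (SetLike.mul_mem_graded hu hx) hxu' hxu

theorem innerAut_mem (hdim : ∀ a ∈ T, finrank ℝ (𝒟 a) = 1) {s t : T} {u : Dˣ}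
    (hu : ↑u ∈ 𝒟 s) {x : D} (hx : x ∈ 𝒟 t) : innerAut (R := ℝ) u x ∈ 𝒟 t := by
  rcases eq_or_ne x 0 with rfl | hx0
  · simp
  obtain ⟨c, hc⟩ := exists_mul_eq_smul_mul hdim hu hx (by rwa [Ne, u.mul_left_eq_zero])
  rw [innerAut_apply, hc, smul_mul_assoc, mul_assoc, u.mul_inv, mul_one]
  exact Submodule.smul_mem _ c hx

theorem exists_commutation_character (hT : ∀ a, 𝒟 a ≠ ⊥ ↔ a ∈ T)
    (hdim : ∀ a ∈ T, finrank ℝ (𝒟 a) = 1) (hdiv : ∀ a : G, ∀ d ∈ 𝒟 a, d ≠ 0 → IsUnit d)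
    (s : T) : ∃ χ : T →+ Additive ℝˣ, ∀ t : T, ∀ u ∈ 𝒟 s, ∀ x ∈ 𝒟 t,
      u * x = ((χ t).toMul : ℝ) • (x * u) := by
  obtain ⟨u₀, hu₀, hu₀0⟩ := exists_mem_ne_zero_of_mem_support hT s
  set U := (hdiv _ u₀ hu₀ hu₀0).unit
  obtain ⟨χ, hχ⟩ := exists_actsByCharacter hT hdim hdiv (innerAut U) fun t x hx ↦
    innerAut_mem hdim (u := U) hu₀ hx
  refine ⟨χ, fun t u hu x hx ↦ ?_⟩
  have hU : u₀ * x = ((χ t).toMul : ℝ) • (x * u₀) := by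
    have := hχ t x hx
    rwa [AlgEquiv.toLinearMap_apply, innerAut_apply, Units.mul_inv_eq_iff_eq_mul,
      smul_mul_assoc] at this
  obtain ⟨a, rfl⟩ := Submodule.exists_eq_smul_of_finrank_eq_one (hdim s s.2) hu hu₀ hu₀0
  rw [smul_mul_assoc, hU, mul_smul_comm, smul_comm]

theorem exists_isCommutationFactor (hT : ∀ a, 𝒟 a ≠ ⊥ ↔ a ∈ T)
    (hdim : ∀ a ∈ T, finrank ℝ (𝒟 a) = 1) (hdiv : ∀ a : G, ∀ d ∈ 𝒟 a, d ≠ 0 → IsUnit d) :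
    ∃ β, IsCommutationFactor 𝒟 T β := by
  choose β hβ using exists_commutation_character hT hdim hdiv
  refine ⟨AddMonoidHom.mk' β fun s s' ↦ ?_, hβ⟩
  ext t
  obtain ⟨u, hu, hu0⟩ := exists_mem_ne_zero_of_mem_support hT s
  obtain ⟨u', hu', hu'0⟩ := exists_mem_ne_zero_of_mem_support hT s'
  obtain ⟨x, hx, hx0⟩ := exists_mem_ne_zero_of_mem_support hT t
  have h0 : x * (u * u') ≠ 0 := by
    rwa [Ne, (hdiv _ x hx hx0).mul_right_eq_zero, (hdiv _ u hu hu0).mul_right_eq_zero]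
  have h := hβ (s + s') t (u * u') (SetLike.mul_mem_graded hu hu') x hx
  rw [mul_assoc, hβ s' t u' hu' x hx, mul_smul_comm, ← mul_assoc, hβ s t u hu x hx,
    smul_mul_assoc, smul_smul, mul_assoc] at h
  simpa [mul_comm] using smul_left_injective ℝ h0 h.symm

end GradedAlgebra

/-- Let `D` be a finite-dimensional simple real associative algebra with a division
`G`-grading `Γ₀` of type (1-d): all homogeneous components are one-dimensional and
the support `T` is not an elementary abelian 2-group.  Then every automorphism of
`D` stabilizing the grading is inner, and the stabilizer is isomorphic to
`Hom(T, {±1}) ≅ T / T^[2]`. -/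
theorem stabilizer_of_type1d_grading
    {G : Type*} [AddCommGroup G]
    {D : Type*} [Ring D] [Algebra ℝ D] [FiniteDimensional ℝ D] [Nontrivial D]
    (hsimple : ∀ I : TwoSidedIdeal D, I = ⊥ ∨ I = ⊤)
    (𝒟 : G → Submodule ℝ D)
    (hmul : ∀ a b : G, ∀ x ∈ 𝒟 a, ∀ y ∈ 𝒟 b, x * y ∈ 𝒟 (a + b))
    (hone : (1 : D) ∈ 𝒟 0)
    (hindep : iSupIndep 𝒟) (htop : (⨆ a, 𝒟 a) = ⊤)
    (T : AddSubgroup G) (hT : ∀ a : G, 𝒟 a ≠ ⊥ ↔ a ∈ T)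
    (hdim : ∀ a ∈ T, Module.finrank ℝ (𝒟 a) = 1)
    (hdiv : ∀ a : G, ∀ d ∈ 𝒟 a, d ≠ 0 → IsUnit d)
    (hnot2 : ∃ t ∈ T, t + t ≠ 0) :
    (∀ ψ : D ≃ₐ[ℝ] D, (∀ a : G, ∀ x ∈ 𝒟 a, ψ x ∈ 𝒟 a) →
        ∃ U : Dˣ, ∀ x : D, ψ x = (U : D) * x * ((U⁻¹ : Dˣ) : D)) ∧
    (∃ Φ : (T →+ Additive ℝˣ) → (D ≃ₐ[ℝ] D),
      (∀ χ₁ χ₂, Φ (χ₁ + χ₂) = Φ χ₁ * Φ χ₂) ∧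
      Function.Injective Φ ∧
      (∀ χ, ∀ a : G, ∀ x ∈ 𝒟 a, (Φ χ) x ∈ 𝒟 a) ∧
      (∀ ψ : D ≃ₐ[ℝ] D, (∀ a : G, ∀ x ∈ 𝒟 a, ψ x ∈ 𝒟 a) → ∃ χ, Φ χ = ψ)) ∧
    Nonempty ((T →+ Additive ℝˣ) ≃+ (T ⧸ (doublingHom T).range)) := by
  have : SetLike.GradedMonoid 𝒟 :=
    { one_mem := hone, mul_mem := fun a b _ _ ha hb ↦ hmul a b _ ha _ hb }
  have : IsSimpleRing D := ⟨⟨hsimple⟩⟩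
  have : Finite T := finite_support hindep hT
  obtain ⟨β, hβ⟩ := exists_isCommutationFactor hT hdim hdiv
  have hβsurj := surjective_of_ker_le_doubling β (hβ.ker_le_doubling hT htop hindep hnot2)
  have hinner (χ : T →+ Additive ℝˣ) :
      ∃ u : Dˣ, ActsByCharacter 𝒟 T (innerAut u).toLinearMap χ := by
    obtain ⟨s, rfl⟩ := hβsurj χ
    obtain ⟨u, hu⟩ := exists_unit_mem hT hdiv s
    exact ⟨u, hβ.actsByCharacter_innerAut hu⟩
  choose u hu using hinner
  have hstab (ψ : D ≃ₐ[ℝ] D) (hψ : ∀ a : G, ∀ x ∈ 𝒟 a, ψ x ∈ 𝒟 a) :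
      ∃ χ, ActsByCharacter 𝒟 T ψ.toLinearMap χ :=
    exists_actsByCharacter hT hdim hdiv ψ fun t ↦ hψ t
  have heq {ψ ψ' : D ≃ₐ[ℝ] D} {χ} (h : ActsByCharacter 𝒟 T ψ.toLinearMap χ)
      (h' : ActsByCharacter 𝒟 T ψ'.toLinearMap χ) : ψ = ψ' :=
    AlgEquiv.toLinearMap_injective (h.linearMap_eq htop hT h')
  refine ⟨fun ψ hψ ↦ ?_, ⟨fun χ ↦ innerAut (u χ), fun χ₁ χ₂ ↦ heq (hu _) ((hu χ₁).comp (hu χ₂)),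
    fun χ₁ χ₂ h ↦ (hu χ₁).character_eq hT (by simpa only [h] using hu χ₂),
    fun χ ↦ (hu χ).mapsTo hT, fun ψ hψ ↦ ?_⟩, nonempty_addEquiv_quotient_doubling T⟩
  · obtain ⟨χ, hχ⟩ := hstab ψ hψ
    exact ⟨u χ, fun x ↦ by rw [heq hχ (hu χ)]; rfl⟩
  · obtain ⟨χ, hχ⟩ := hstab ψ hψ
    exact ⟨χ, heq (hu χ) hχ⟩
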